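/- arXiv:2509.16641 — 2 statements merged into one kernel-verified Lean document; each statement's English description precedes it below -/
import Mathlib

section
/- Let X ⊂ ℝ^d be relatively separated. For any s > d there exists a constant C > 0 such that for all k, l ∈ X: ∑_{n ∈ X} (1 + |k - n|)^{-s} (1 + |l - n|)^{-s} ≤ C (1 + |k - l|)^{-s}. -/
/-!
Since `1 + |k - l| ≤ 2 max (1 + |k - n|, 1 + |l - n|)`, the product of the two weights is at
most `2^s (1 + |k - l|)^(-s)` times their sum, so it suffices to bound
`∑_{n ∈ X} (1 + |y - n|)^(-s)` uniformly in `y`. Group the points `n` by the integer vector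
`m = ⌊n - y⌋`: each group lies in a unit cube, so it has at most `R` elements, and
`(1 + |y - n|)^(-s) ≤ 2^s ∏ᵢ (1 + |mᵢ|)^(-s/d)`. Summed over `ℤ^d` this is the `d`-th power of a
one-dimensional series, which converges since `s / d > 1`.
-/

open scoped ENNReal

namespace ENNReal

theorem tsum_comp_le_mul_tsum_of_encard_fiber_le {β γ : Type*} (g : β → γ) (w : γ → ℝ≥0∞)
    {R : ℕ∞} (hg : ∀ c, (g ⁻¹' {c}).encard ≤ R) :
    ∑' b, w (g b) ≤ R * ∑' c, w c := by
  rw [← ENNReal.tsum_fiberwise _ g, ← ENNReal.tsum_mul_left]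
  refine ENNReal.tsum_le_tsum fun c => ?_
  calc ∑' b : g ⁻¹' {c}, w (g b) = ∑' _ : g ⁻¹' {c}, w c := tsum_congr fun b => by rw [b.2]
    _ = (g ⁻¹' {c}).encard * w c := ENNReal.tsum_set_const _ _
    _ ≤ R * w c := by gcongr; exact hg c

theorem tsum_pi_prod_eq_pow {α : Type*} (g : α → ℝ≥0∞) (d : ℕ) :
    ∑' m : Fin d → α, ∏ i, g (m i) = (∑' a, g a) ^ d := by
  induction d with
  | zero => simp
  | succ d ih =>
    rw [← (Fin.consEquiv fun _ => α).tsum_eq, ENNReal.tsum_prod', pow_succ', ← ih,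
      ← ENNReal.tsum_mul_right]
    refine tsum_congr fun a => ?_
    rw [← ENNReal.tsum_mul_left]
    exact tsum_congr fun m => by simp [Fin.consEquiv, Fin.prod_univ_succ]

end ENNReal

theorem Real.one_add_rpow_neg_mul_le {s a b c : ℝ} (hs : 0 ≤ s) (ha : 0 ≤ a) (hb : 0 ≤ b)
    (hc : 0 ≤ c) (habc : c ≤ a + b) :
    (1 + a) ^ (-s) * (1 + b) ^ (-s) ≤
      2 ^ s * (1 + c) ^ (-s) * ((1 + a) ^ (-s) + (1 + b) ^ (-s)) := by
  wlog hab : a ≤ b generalizing a b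
  · simpa only [mul_comm, add_comm] using this hb ha (by linarith) (le_of_not_ge hab)
  have hb_far : (1 + b) ^ (-s) ≤ 2 ^ s * (1 + c) ^ (-s) :=
    calc (1 + b) ^ (-s) ≤ ((1 + c) / 2) ^ (-s) :=
          Real.rpow_le_rpow_of_nonpos (by positivity) (by linarith) (by linarith)
      _ = 2 ^ s * (1 + c) ^ (-s) := by
          rw [Real.div_rpow (by positivity) zero_le_two, Real.rpow_neg zero_le_two, div_inv_eq_mul,
            mul_comm]
  calc (1 + a) ^ (-s) * (1 + b) ^ (-s) ≤ 2 ^ s * (1 + c) ^ (-s) * (1 + a) ^ (-s) := by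
        rw [mul_comm]; gcongr
    _ ≤ 2 ^ s * (1 + c) ^ (-s) * ((1 + a) ^ (-s) + (1 + b) ^ (-s)) := by
        gcongr; exact le_add_of_nonneg_right (by positivity)

theorem Real.one_add_rpow_neg_le_prod {d : ℕ} {s x : ℝ} (hs : 0 ≤ s) (hx : 0 ≤ x)
    (m : Fin d → ℝ) (hm : ∀ i, |m i| ≤ 1 + x) :
    (1 + x) ^ (-s) ≤ 2 ^ s * ∏ i, (1 + |m i|) ^ (-(s / d)) := by
  rcases Nat.eq_zero_or_pos d with rfl | hd
  · simpa using (Real.rpow_le_one_of_one_le_of_nonpos (by linarith) (by linarith)).trans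
      (Real.one_le_rpow one_le_two hs)
  calc (1 + x) ^ (-s) = 2 ^ s * ((2 * (1 + x)) ^ (-(s / d))) ^ d := by
        rw [← Real.rpow_mul_natCast (by positivity), neg_mul, div_mul_cancel₀ _ (by positivity),
          Real.mul_rpow zero_le_two (by positivity), ← mul_assoc, Real.rpow_neg zero_le_two,
          mul_inv_cancel₀ (by positivity), one_mul]
    _ = 2 ^ s * ∏ _i : Fin d, (2 * (1 + x)) ^ (-(s / d)) := by
        rw [Finset.prod_const, Finset.card_fin]
    _ ≤ 2 ^ s * ∏ i, (1 + |m i|) ^ (-(s / d)) := by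
        refine mul_le_mul_of_nonneg_left (Finset.prod_le_prod (fun i _ => by positivity)
          fun i _ => ?_) (by positivity)
        exact Real.rpow_le_rpow_of_nonpos (by positivity) (by linarith [hm i])
          (neg_nonpos.2 (by positivity))

theorem Real.summable_one_add_abs_int_rpow_neg {t : ℝ} (ht : 1 < t) :
    Summable fun j : ℤ => (1 + |(j : ℝ)|) ^ (-t) := by
  have hnat : Summable fun n : ℕ => (1 + (n : ℝ)) ^ (-t) := by
    simpa [add_comm] using (summable_nat_add_iff 1).2 (Real.summable_nat_rpow.2 (by linarith))
  exact .of_nat_of_neg (by simpa using hnat) (by simpa using hnat)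

section RelativelySeparated

variable {d : ℕ} {X : Set (EuclideanSpace ℝ (Fin d))} {R : ℕ}

def IsRelSeparated (X : Set (EuclideanSpace ℝ (Fin d))) (R : ℕ) : Prop :=
  ∀ x : EuclideanSpace ℝ (Fin d), {k ∈ X | ∀ i, x i ≤ k i ∧ k i ≤ x i + 1}.encard ≤ R

theorem encard_floor_fiber_le (hX : IsRelSeparated X R)
    (y : EuclideanSpace ℝ (Fin d)) (m : Fin d → ℤ) :
    ((fun (n : X) i => ⌊(n : EuclideanSpace ℝ (Fin d)) i - y i⌋) ⁻¹' {m}).encard ≤ R := by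
  set x : EuclideanSpace ℝ (Fin d) := WithLp.toLp 2 fun i => y i + m i
  calc _ = (Subtype.val '' _).encard := (Subtype.val_injective.encard_image _).symm
    _ ≤ {k ∈ X | ∀ i, x i ≤ k i ∧ k i ≤ x i + 1}.encard := by
        refine Set.encard_le_encard ?_
        rintro _ ⟨n, hn, rfl⟩
        refine ⟨n.2, fun i => ?_⟩
        have := Int.floor_eq_iff.1 (congr_fun hn i)
        constructor <;> simp only [x] <;> linarith
    _ ≤ R := hX x

theorem tsum_one_add_norm_sub_rpow_neg_le (hX : IsRelSeparated X R) {s : ℝ} (hs : 0 ≤ s)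
    (y : EuclideanSpace ℝ (Fin d)) :
    ∑' n : X, ENNReal.ofReal ((1 + ‖y - n‖) ^ (-s)) ≤
      R * (ENNReal.ofReal (2 ^ s) *
        (∑' j : ℤ, ENNReal.ofReal ((1 + |(j : ℝ)|) ^ (-(s / d)))) ^ d) := by
  set φ : X → Fin d → ℤ := fun n i => ⌊(n : EuclideanSpace ℝ (Fin d)) i - y i⌋
  set w : (Fin d → ℤ) → ℝ≥0∞ := fun m =>
    ENNReal.ofReal (2 ^ s) * ∏ i, ENNReal.ofReal ((1 + |(m i : ℝ)|) ^ (-(s / d)))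
  have hweight (n : X) : ENNReal.ofReal ((1 + ‖y - n‖) ^ (-s)) ≤ w (φ n) := by
    simp only [w]
    rw [← ENNReal.ofReal_prod_of_nonneg fun i _ => by positivity,
      ← ENNReal.ofReal_mul (by positivity)]
    refine ENNReal.ofReal_le_ofReal
      (Real.one_add_rpow_neg_le_prod hs (norm_nonneg _) _ fun i => ?_)
    have hfloor : |(φ n i : ℝ)| ≤ 1 + |(n : EuclideanSpace ℝ (Fin d)) i - y i| := by
      have := Int.floor_eq_iff.1 (rfl : φ n i = _)
      rw [abs_le]; constructor <;> linarith [neg_abs_le ((n : EuclideanSpace ℝ (Fin d)) i - y i),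
        le_abs_self ((n : EuclideanSpace ℝ (Fin d)) i - y i)]
    have hcoord : |(n : EuclideanSpace ℝ (Fin d)) i - y i| ≤ ‖y - n‖ := by
      simpa [abs_sub_comm] using PiLp.norm_apply_le (y - (n : EuclideanSpace ℝ (Fin d))) i
    linarith
  calc _ ≤ ∑' n : X, w (φ n) := ENNReal.tsum_le_tsum hweight
    _ ≤ R * ∑' m, w m :=
        ENNReal.tsum_comp_le_mul_tsum_of_encard_fiber_le φ w (encard_floor_fiber_le hX y)
    _ = _ := by
        rw [ENNReal.tsum_mul_left,
          ENNReal.tsum_pi_prod_eq_pow fun j : ℤ => ENNReal.ofReal ((1 + |(j : ℝ)|) ^ (-(s / d)))]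

theorem exists_tsum_one_add_norm_sub_rpow_neg_le (hX : IsRelSeparated X R) {s : ℝ} (hs : d < s) :
    ∃ b : ℝ, 0 ≤ b ∧ ∀ y : EuclideanSpace ℝ (Fin d),
      ∑' n : X, ENNReal.ofReal ((1 + ‖y - n‖) ^ (-s)) ≤ ENNReal.ofReal b := by
  have hseries : (∑' j : ℤ, ENNReal.ofReal ((1 + |(j : ℝ)|) ^ (-(s / d)))) ^ d ≠ ∞ := by
    rcases Nat.eq_zero_or_pos d with rfl | hd
    · simp
    rw [← ENNReal.ofReal_tsum_of_nonneg (fun j => by positivity)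
      (Real.summable_one_add_abs_int_rpow_neg ((one_lt_div (by positivity)).2 hs))]
    exact ENNReal.pow_ne_top ENNReal.ofReal_ne_top
  set B : ℝ≥0∞ := R * (ENNReal.ofReal (2 ^ s) *
      (∑' j : ℤ, ENNReal.ofReal ((1 + |(j : ℝ)|) ^ (-(s / d)))) ^ d)
  have hB : B ≠ ∞ := ENNReal.mul_ne_top (by simp) (ENNReal.mul_ne_top ENNReal.ofReal_ne_top hseries)
  refine ⟨B.toReal, ENNReal.toReal_nonneg, fun y => ?_⟩
  rw [ENNReal.ofReal_toReal hB]
  exact tsum_one_add_norm_sub_rpow_neg_le hX ((Nat.cast_nonneg d).trans hs.le) y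

end RelativelySeparated

theorem stmt_9_general (d : ℕ) (X : Set (EuclideanSpace ℝ (Fin d)))
    (R : ℕ)
    (hsep : ∀ x : EuclideanSpace ℝ (Fin d),
      {k ∈ X | ∀ i, x i ≤ k i ∧ k i ≤ x i + 1}.Finite ∧
      {k ∈ X | ∀ i, x i ≤ k i ∧ k i ≤ x i + 1}.ncard ≤ R)
    (s : ℝ) (hs : (d : ℝ) < s) :
    ∃ C : ℝ, 0 < C ∧ ∀ k ∈ X, ∀ l ∈ X,
      ∑' n : X, ENNReal.ofReal
          ((1 + ‖k - (n : EuclideanSpace ℝ (Fin d))‖) ^ (-s) *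
            (1 + ‖l - (n : EuclideanSpace ℝ (Fin d))‖) ^ (-s))
        ≤ ENNReal.ofReal (C * (1 + ‖k - l‖) ^ (-s)) := by
  have hs0 : 0 ≤ s := (Nat.cast_nonneg d).trans hs.le
  obtain ⟨b, hb, hsum⟩ := exists_tsum_one_add_norm_sub_rpow_neg_le
    (fun x => by rw [← (hsep x).1.cast_ncard_eq]; exact_mod_cast (hsep x).2) hs
  refine ⟨2 ^ s * (2 * b) + 1, by positivity, fun k _ l _ => ?_⟩
  set K := 2 ^ s * (1 + ‖k - l‖) ^ (-s)
  calc _ ≤ ∑' n : X, ENNReal.ofReal K * (ENNReal.ofReal ((1 + ‖k - n‖) ^ (-s)) +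
          ENNReal.ofReal ((1 + ‖l - n‖) ^ (-s))) := ENNReal.tsum_le_tsum fun n => by
        rw [← ENNReal.ofReal_add (by positivity) (by positivity),
          ← ENNReal.ofReal_mul (by positivity)]
        refine ENNReal.ofReal_le_ofReal (Real.one_add_rpow_neg_mul_le hs0 (norm_nonneg _)
          (norm_nonneg _) (norm_nonneg _) ?_)
        simpa only [dist_eq_norm] using dist_triangle_right k l n
    _ = ENNReal.ofReal K * (∑' n : X, ENNReal.ofReal ((1 + ‖k - n‖) ^ (-s)) +
          ∑' n : X, ENNReal.ofReal ((1 + ‖l - n‖) ^ (-s))) := by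
        rw [ENNReal.tsum_mul_left, ENNReal.tsum_add]
    _ ≤ ENNReal.ofReal K * (ENNReal.ofReal b + ENNReal.ofReal b) := by gcongr <;> exact hsum _
    _ ≤ _ := by
        rw [← ENNReal.ofReal_add hb hb, ← ENNReal.ofReal_mul (by positivity)]
        exact ENNReal.ofReal_le_ofReal
          (by linarith [show 0 ≤ (1 + ‖k - l‖) ^ (-s) by positivity])

theorem stmt_9 (d : ℕ) (X : Set (EuclideanSpace ℝ (Fin d)))
    (hX : X.Countable) (R : ℕ)
    (hsep : ∀ x : EuclideanSpace ℝ (Fin d),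
      {k ∈ X | ∀ i, x i ≤ k i ∧ k i ≤ x i + 1}.Finite ∧
      {k ∈ X | ∀ i, x i ≤ k i ∧ k i ≤ x i + 1}.ncard ≤ R)
    (s : ℝ) (hs : (d : ℝ) < s) :
    ∃ C : ℝ, 0 < C ∧ ∀ k ∈ X, ∀ l ∈ X,
      ∑' n : X, ENNReal.ofReal
          ((1 + ‖k - (n : EuclideanSpace ℝ (Fin d))‖) ^ (-s) *
            (1 + ‖l - (n : EuclideanSpace ℝ (Fin d))‖) ^ (-s))
        ≤ ENNReal.ofReal (C * (1 + ‖k - l‖) ^ (-s)) :=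
  stmt_9_general d X R hsep s hs
end

section
/- (Hulanicki's lemma for p-Banach algebras, one direction) Let 0 < p ≤ 1, let B be a unital p-Banach *-algebra, and let A ⊆ B be a *-subalgebra containing the unit, equipped with a complete p-norm making it a p-Banach algebra. If the spectral radii satisfy r_A(a) ≤ r_B(a) for all self-adjoint a ∈ A, then r_A(a) = r_B(a) for all self-adjoint a ∈ A, and consequently σ_A(a) = σ_B(a) for all a ∈ A, i.e., A is inverse closed in B. -/
open scoped ENNReal

/-- The `p`-spectral radius `sup { |λ|^p : λ ∈ σ }` of a spectrum, in `ℝ≥0∞`. -/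
noncomputable def pSpecRadius (p : ℝ) (σ : Set ℂ) : ℝ≥0∞ :=
  ⨆ z ∈ σ, ENNReal.ofReal (‖z‖ ^ p)

/-- `n` is a `p`-norm on the algebra `B`. -/
def IsPNorm (p : ℝ) {B : Type*} [Ring B] [Algebra ℂ B] (n : B → ℝ) : Prop :=
  (∀ x, 0 ≤ n x) ∧ (∀ x, n x = 0 ↔ x = 0) ∧
    (∀ x y, n (x + y) ≤ n x + n y) ∧
    (∀ (α : ℂ) (x : B), n (α • x) = ‖α‖ ^ p * n x) ∧
    (∀ x y, n (x * y) ≤ n x * n y)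

/-- Completeness of a `p`-norm `n`, expressed via Cauchy sequences. -/
def IsPComplete {B : Type*} [Ring B] (n : B → ℝ) : Prop :=
  ∀ u : ℕ → B,
    (∀ ε : ℝ, 0 < ε → ∃ N, ∀ i ≥ N, ∀ j ≥ N, n (u i - u j) < ε) →
    ∃ x : B, ∀ ε : ℝ, 0 < ε → ∃ N, ∀ i ≥ N, n (u i - x) < ε

/-!
Let `g ∈ S` be self-adjoint and invertible in `B`. Symmetry of `B` and the `p`-norm bounds on
`σ_B(g)` and `σ_B(g⁻¹)` place `σ_B(g²)` in a real interval `[m, M]` with `m > 0`. For the midpoint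
`c`, `r_B(g² - c) ≤ ((M - m) / 2)^p < c^p`; if `g²` were not invertible in `S`, then
`-c ∈ σ_S(g² - c)` would give `r_S(g² - c) ≥ c^p`, contradicting `r_S ≤ r_B`. An arbitrary `a`
invertible in `B` is then invertible in `S`, since `a⋆a` and `aa⋆` are.
-/

namespace IsPNorm

variable {p : ℝ} {B : Type*} [Ring B] [Algebra ℂ B] {n : B → ℝ}

theorem map_neg_eq_map (hn : IsPNorm p n) (x : B) : n (-x) = n x := by
  simpa using hn.2.2.2.1 (-1) x

/-- A `p`-norm is not homogeneous, but `NormedRing` does not ask for homogeneity, so Mathlib's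
Neumann series apply to it. -/
def toRingNorm (hn : IsPNorm p n) : RingNorm B where
  toFun := n
  map_zero' := (hn.2.1 0).2 rfl
  add_le' := hn.2.2.1
  neg' := hn.map_neg_eq_map
  mul_le' := hn.2.2.2.2
  eq_zero_of_map_eq_zero' x := (hn.2.1 x).1

theorem isUnit_one_sub (hn : IsPNorm p n) (hc : IsPComplete n) {x : B} (hx : n x < 1) :
    IsUnit (1 - x) := by
  let := hn.toRingNorm.toNormedRing
  have hd : ∀ x y : B, dist x y = n (x - y) := fun x y => dist_eq_norm x y
  have : CompleteSpace B := Metric.complete_of_cauchySeq_tendsto fun u hu => by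
    obtain ⟨a, ha⟩ := hc u (by simpa only [hd] using Metric.cauchySeq_iff.1 hu)
    exact ⟨a, Metric.tendsto_atTop.2 (by simpa only [hd] using ha)⟩
  exact isUnit_one_sub_of_norm_lt_one hx

theorem norm_rpow_le_of_mem_spectrum (hp : 0 < p) (hn : IsPNorm p n) (hc : IsPComplete n)
    {b : B} {z : ℂ} (hz : z ∈ spectrum ℂ b) : ‖z‖ ^ p ≤ n b := by
  by_contra! hlt
  have hz0 : z ≠ 0 := by
    rintro rfl
    simp [Real.zero_rpow hp.ne', (hn.1 b).not_gt] at hlt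
  have h1 : (1 : ℂ) ∈ spectrum ℂ (z⁻¹ • b) := by
    simpa [Units.smul_def, hz0] using spectrum.smul_mem_smul_iff (r := (Units.mk0 z hz0)⁻¹).2 hz
  refine spectrum.mem_iff.1 h1 ?_
  rw [map_one]
  refine hn.isUnit_one_sub hc ?_
  rw [hn.2.2.2.1, norm_inv, Real.inv_rpow (norm_nonneg z), inv_mul_lt_iff₀ ((hn.1 b).trans_lt hlt)]
  simpa using hlt

theorem norm_le_of_mem_spectrum (hp : 0 < p) (hn : IsPNorm p n) (hc : IsPComplete n)
    {b : B} {z : ℂ} (hz : z ∈ spectrum ℂ b) : ‖z‖ ≤ n b ^ p⁻¹ := by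
  rw [← Real.rpow_rpow_inv (norm_nonneg z) hp.ne']
  exact Real.rpow_le_rpow (by positivity) (hn.norm_rpow_le_of_mem_spectrum hp hc hz) (by positivity)

theorem exists_spectrum_subset_annulus (hp : 0 < p) (hn : IsPNorm p n) (hc : IsPComplete n)
    (u : Bˣ) : ∃ ρ R : ℝ, 0 < ρ ∧ ρ ≤ R ∧ ∀ z ∈ spectrum ℂ (u : B), ρ ≤ ‖z‖ ∧ ‖z‖ ≤ R := by
  -- the `+ 1` keeps `ρ` positive in the zero ring, where `n u⁻¹ = 0`
  set ρ := (n ↑u⁻¹ ^ p⁻¹ + 1)⁻¹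
  have hρ : 0 < ρ := inv_pos.2 (by have := Real.rpow_nonneg (hn.1 ↑u⁻¹) p⁻¹; linarith)
  refine ⟨ρ, max (n u ^ p⁻¹) ρ, hρ, le_max_right _ _, fun z hz => ⟨?_, ?_⟩⟩
  · have hz0 : 0 < ‖z‖ := norm_pos_iff.2 (spectrum.ne_zero_of_mem_of_unit hz)
    have hinv := hn.norm_le_of_mem_spectrum hp hc (spectrum.inv₀_mem_inv_iff.2 hz)
    rw [norm_inv] at hinv
    exact inv_le_of_inv_le₀ hz0 (hinv.trans (le_add_of_nonneg_right zero_le_one))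
  · exact (hn.norm_le_of_mem_spectrum hp hc hz).trans (le_max_left _ _)

end IsPNorm

theorem le_pSpecRadius {p : ℝ} {σ : Set ℂ} {z : ℂ} (hz : z ∈ σ) :
    ENNReal.ofReal (‖z‖ ^ p) ≤ pSpecRadius p σ :=
  le_biSup (fun z => ENNReal.ofReal (‖z‖ ^ p)) hz

theorem pSpecRadius_le {p : ℝ} (hp : 0 ≤ p) {σ : Set ℂ} {r : ℝ} (h : ∀ z ∈ σ, ‖z‖ ≤ r) :
    pSpecRadius p σ ≤ ENNReal.ofReal (r ^ p) :=
  iSup₂_le fun z hz => ENNReal.ofReal_le_ofReal (Real.rpow_le_rpow (norm_nonneg z) (h z hz) hp)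

theorem isUnit_of_isUnit_mul_of_isUnit_mul {M : Type*} [Monoid M] {a b c : M}
    (hba : IsUnit (b * a)) (hac : IsUnit (a * c)) : IsUnit a := by
  obtain ⟨u, hu⟩ := hba
  obtain ⟨v, hv⟩ := hac
  have hl : (↑u⁻¹ * b) * a = 1 := by rw [mul_assoc, ← hu, Units.inv_mul]
  have hr : a * (c * ↑v⁻¹) = 1 := by rw [← mul_assoc, ← hv, Units.mul_inv]
  exact isUnit_iff_exists.2 ⟨_, hr, left_inv_eq_right_inv hl hr ▸ hl⟩

theorem spectrum_eq_of_isUnit_coe {R A S : Type*} [CommSemiring R] [Ring A] [Algebra R A]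
    [SetLike S A] [SubringClass S A] [SMulMemClass S R A] {s : S}
    (h : ∀ a : s, IsUnit (a : A) → IsUnit a) (a : s) : spectrum R a = spectrum R (a : A) :=
  Set.Subset.antisymm (fun _ hz hzA => hz (h _ hzA)) (spectrum.subset_subalgebra a)

theorem spectrum_sq_subset_closedBall {A : Type*} [Ring A] [Algebra ℂ A] {a : A} {ρ R : ℝ}
    (hρ : 0 ≤ ρ) (hreal : ∀ z ∈ spectrum ℂ a, z.im = 0)
    (hann : ∀ z ∈ spectrum ℂ a, ρ ≤ ‖z‖ ∧ ‖z‖ ≤ R) :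
    spectrum ℂ (a ^ 2) ⊆
      Metric.closedBall (((ρ ^ 2 + R ^ 2) / 2 : ℝ) : ℂ) ((R ^ 2 - ρ ^ 2) / 2) := by
  rw [spectrum.map_pow_of_pos a two_pos]
  rintro _ ⟨z, hz, rfl⟩
  obtain ⟨t, rfl⟩ : ∃ t : ℝ, z = t := ⟨z.re, Complex.ext rfl (by simp [hreal z hz])⟩
  obtain ⟨h1, h2⟩ := hann _ hz
  rw [Complex.norm_real, Real.norm_eq_abs] at h1 h2
  simp only [Metric.mem_closedBall, dist_eq_norm]
  rw [← Complex.ofReal_pow, ← Complex.ofReal_sub,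
    Complex.norm_real, Real.norm_eq_abs, abs_le, ← sq_abs t]
  constructor <;> nlinarith

section Subalgebra

variable {p : ℝ} {B : Type*} [Ring B] [Algebra ℂ B] [StarRing B] [StarModule ℂ B]
  {S : StarSubalgebra ℂ B}

theorem isUnit_of_spectrum_subset_closedBall (hp : 0 < p)
    (hrad : ∀ a : S, star a = a →
      pSpecRadius p (spectrum ℂ a) ≤ pSpecRadius p (spectrum ℂ (a : B)))
    {x : S} (hx : star x = x) {c r : ℝ} (hr : 0 ≤ r) (hrc : r < c)
    (hσ : spectrum ℂ (x : B) ⊆ Metric.closedBall (c : ℂ) r) : IsUnit x := by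
  by_contra hxu
  set y := x - algebraMap ℂ S c
  have hy : star y = y := by simp [y, hx, ← algebraMap_star_comm]
  have hS : (-c : ℂ) ∈ spectrum ℂ y := by
    rw [← spectrum.sub_singleton_eq]
    exact ⟨0, (spectrum.zero_mem_iff ℂ).2 hxu, c, rfl, zero_sub _⟩
  have hB : ∀ z ∈ spectrum ℂ (y : B), ‖z‖ ≤ r := by
    change ∀ z ∈ spectrum ℂ ((x : B) - algebraMap ℂ B c), ‖z‖ ≤ r
    rw [← spectrum.sub_singleton_eq]
    rintro _ ⟨w, hw, _, rfl, rfl⟩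
    simpa [dist_eq_norm] using hσ hw
  have h := (le_pSpecRadius hS).trans ((hrad y hy).trans (pSpecRadius_le hp.le hB))
  rw [norm_neg, Complex.norm_real, Real.norm_eq_abs, abs_of_pos (hr.trans_lt hrc),
    ENNReal.ofReal_le_ofReal_iff (by positivity), Real.rpow_le_rpow_iff (by linarith) hr hp] at h
  linarith

variable {nB : B → ℝ}

theorem isUnit_of_star_eq_of_isUnit_coe (hp : 0 < p) (hnB : IsPNorm p nB)
    (hnBc : IsPComplete nB)
    (hsymm : ∀ b : B, star b = b → ∀ z ∈ spectrum ℂ b, z.im = 0)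
    (hrad : ∀ a : S, star a = a →
      pSpecRadius p (spectrum ℂ a) ≤ pSpecRadius p (spectrum ℂ (a : B)))
    {g : S} (hg : star g = g) (hgB : IsUnit (g : B)) : IsUnit g := by
  obtain ⟨u, hu⟩ := hgB
  obtain ⟨ρ, R, hρ, hρR, hann⟩ := hnB.exists_spectrum_subset_annulus hp hnBc u
  rw [hu] at hann
  have hσ := spectrum_sq_subset_closedBall hρ.le (hsymm _ (congrArg Subtype.val hg)) hann
  exact (isUnit_pow_iff two_ne_zero).1 (isUnit_of_spectrum_subset_closedBall hp hrad
    (by rw [star_pow, hg]) (by nlinarith) (by nlinarith) hσ)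

theorem isUnit_of_isUnit_coe (hp : 0 < p) (hnB : IsPNorm p nB) (hnBc : IsPComplete nB)
    (hsymm : ∀ b : B, star b = b → ∀ z ∈ spectrum ℂ b, z.im = 0)
    (hrad : ∀ a : S, star a = a →
      pSpecRadius p (spectrum ℂ a) ≤ pSpecRadius p (spectrum ℂ (a : B)))
    {a : S} (ha : IsUnit (a : B)) : IsUnit a :=
  isUnit_of_isUnit_mul_of_isUnit_mul
    (isUnit_of_star_eq_of_isUnit_coe hp hnB hnBc hsymm hrad (g := star a * a) (by simp)
      (ha.star.mul ha))
    (isUnit_of_star_eq_of_isUnit_coe hp hnB hnBc hsymm hrad (g := a * star a) (by simp)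
      (ha.mul ha.star))

end Subalgebra

theorem stmt_17_general (p : ℝ) (hp0 : 0 < p)
    (B : Type*) [Ring B] [Algebra ℂ B] [StarRing B] [StarModule ℂ B]
    (nB : B → ℝ) (hnB : IsPNorm p nB) (hnBc : IsPComplete nB)
    -- `B` is symmetric: self-adjoint elements have real spectrum
    (hsymm : ∀ b : B, star b = b → ∀ z ∈ spectrum ℂ b, z.im = 0)
    -- `S` is a star-subalgebra of `B` containing the unit, with its own complete `p`-norm
    (S : StarSubalgebra ℂ B)
    -- hypothesis: `r_A(a) ≤ r_B(a)` for all self-adjoint `a ∈ S`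
    (hrad : ∀ a : S, star a = a →
      pSpecRadius p (spectrum ℂ a) ≤ pSpecRadius p (spectrum ℂ (a : B))) :
    (∀ a : S, star a = a →
      pSpecRadius p (spectrum ℂ a) = pSpecRadius p (spectrum ℂ (a : B))) ∧
    (∀ a : S, spectrum ℂ a = spectrum ℂ (a : B)) ∧
    (∀ a : S, IsUnit (a : B) → ∃ b : S, b * a = 1 ∧ a * b = 1) := by
  have hinv : ∀ a : S, IsUnit (a : B) → IsUnit a := fun _ =>
    isUnit_of_isUnit_coe hp0 hnB hnBc hsymm hrad
  have hspec : ∀ a : S, spectrum ℂ a = spectrum ℂ (a : B) := spectrum_eq_of_isUnit_coe hinv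
  refine ⟨fun a _ => by rw [hspec], hspec, fun a ha => ?_⟩
  obtain ⟨b, hab, hba⟩ := isUnit_iff_exists.1 (hinv a ha)
  exact ⟨b, hba, hab⟩

theorem stmt_17 (p : ℝ) (hp0 : 0 < p) (hp1 : p ≤ 1)
    (B : Type*) [Ring B] [Algebra ℂ B] [StarRing B] [StarModule ℂ B]
    (nB : B → ℝ) (hnB : IsPNorm p nB) (hnBc : IsPComplete nB)
    (hnBstar : ∀ x : B, nB (star x) = nB x)
    -- `B` is symmetric: self-adjoint elements have real spectrum
    (hsymm : ∀ b : B, star b = b → ∀ z ∈ spectrum ℂ b, z.im = 0)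
    -- `S` is a star-subalgebra of `B` containing the unit, with its own complete `p`-norm
    (S : StarSubalgebra ℂ B)
    (nA : S → ℝ) (hnA : IsPNorm p nA) (hnAc : IsPComplete nA)
    (hnAstar : ∀ x : S, nA (star x) = nA x)
    -- hypothesis: `r_A(a) ≤ r_B(a)` for all self-adjoint `a ∈ S`
    (hrad : ∀ a : S, star a = a →
      pSpecRadius p (spectrum ℂ a) ≤ pSpecRadius p (spectrum ℂ (a : B))) :
    (∀ a : S, star a = a →
      pSpecRadius p (spectrum ℂ a) = pSpecRadius p (spectrum ℂ (a : B))) ∧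
    (∀ a : S, spectrum ℂ a = spectrum ℂ (a : B)) ∧
    (∀ a : S, IsUnit (a : B) → ∃ b : S, b * a = 1 ∧ a * b = 1) :=
  stmt_17_general p hp0 B nB hnB hnBc hsymm S hrad
end
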